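/- arXiv:1301.7212 — 2 statements merged into one kernel-verified Lean document; each statement's English description precedes it below -/
import Mathlib

section
/- Let Y_1,…,Y_n be i.i.d. standard normal random variables and δ, q > 0. Then P(n·(Ȳ − δ)²/2 ≥ q) ≥ 1 − exp(−(√n·δ − √(2q))₊²/8), where x₊ = max(x,0). -/
open MeasureTheory ProbabilityTheory Real
open scoped NNReal

/-! With `a = √n δ - √(2q) > 0`, the event fails only if the sum `S` of the `Yᵢ` is at least
`√n a`. As a sum of `n` independent standard normals, `S` is sub-Gaussian with variance proxy `n`,
so the Chernoff bound gives `P(S ≥ √n a) ≤ exp (-a² / 2)`, which is stronger than needed. -/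

lemma hasSubgaussianMGF_of_map_eq_gaussianReal {Ω : Type*} [MeasurableSpace Ω]
    {μ : Measure Ω} {X : Ω → ℝ} {v : ℝ≥0} (h : μ.map X = gaussianReal 0 v) :
    HasSubgaussianMGF X v μ := by
  have hX : AEMeasurable X μ := aemeasurable_of_map_neZero (by rw [h]; infer_instance)
  rw [← HasSubgaussianMGF.id_map_iff hX, h]
  exact ⟨integrable_exp_mul_gaussianReal, fun t ↦ by simp [mgf_id_gaussianReal]⟩

lemma measureReal_sum_ge_le_of_iIndepFun_gaussianReal {Ω ι : Type*} [MeasurableSpace Ω]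
    [Fintype ι] {μ : Measure Ω} {X : ι → Ω → ℝ} (hindep : iIndepFun X μ)
    (hgauss : ∀ i, μ.map (X i) = gaussianReal 0 1) {ε : ℝ} (hε : 0 ≤ ε) :
    μ.real {ω | ε ≤ ∑ i, X i ω} ≤ exp (-ε ^ 2 / (2 * Fintype.card ι)) := by
  have h := HasSubgaussianMGF.measure_sum_ge_le_of_iIndepFun hindep (s := .univ)
    (fun i _ ↦ hasSubgaussianMGF_of_map_eq_gaussianReal (hgauss i)) hε
  simpa [Finset.card_univ, NNReal.coe_natCast] using h

lemma sqrt_mul_sub_lt_of_mul_sub_sq_lt {n : ℕ} (hn : 0 < n) {s δ q : ℝ}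
    (h : n * (s / n - δ) ^ 2 / 2 < q) :
    √n * (√n * δ - √(2 * q)) < s := by
  have hn' : (0 : ℝ) < n := Nat.cast_pos.mpr hn
  have hsq : (s - n * δ) ^ 2 < 2 * q * n := by
    have : n * (s / n - δ) ^ 2 = (s - n * δ) ^ 2 / n := by field_simp
    rw [this, div_div, div_lt_iff₀ (by positivity)] at h
    linarith
  have habs : |s - n * δ| < √(2 * q) * √n := by
    rw [← sqrt_mul' _ hn'.le, ← sqrt_sq_eq_abs]
    exact sqrt_lt_sqrt (sq_nonneg _) hsq
  have hexpand : √n * (√n * δ - √(2 * q)) = n * δ - √(2 * q) * √n := by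
    rw [mul_sub, ← mul_assoc, mul_self_sqrt hn'.le, mul_comm (√n)]
  linarith [neg_abs_le (s - n * δ)]

lemma one_sub_probReal_le_probReal_compl {Ω : Type*} [MeasurableSpace Ω]
    (μ : Measure Ω) [IsProbabilityMeasure μ] (s : Set Ω) : 1 - μ.real s ≤ μ.real sᶜ := by
  have := measureReal_union_le (μ := μ) s sᶜ
  rw [Set.union_compl_self, probReal_univ] at this
  linarith

theorem gaussian_power_estimate_general
    {Ω : Type*} [MeasureSpace Ω] [IsProbabilityMeasure (ℙ : Measure Ω)]
    (n : ℕ) (hn : 0 < n) (δ q : ℝ)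
    (Y : Fin n → Ω → ℝ)
    (hindep : iIndepFun Y ℙ)
    (hgauss : ∀ i, Measure.map (Y i) ℙ = gaussianReal 0 1) :
    1 - Real.exp (-(max (Real.sqrt n * δ - Real.sqrt (2 * q)) 0) ^ 2 / 8)
      ≤ (ℙ {ω | q ≤ (n : ℝ) * ((∑ i, Y i ω) / n - δ) ^ 2 / 2}).toReal := by
  set a := √n * δ - √(2 * q)
  rcases le_or_gt a 0 with ha | ha
  · simp [max_eq_right ha]
  rw [max_eq_left ha.le, ← measureReal_def]
  set E := {ω | q ≤ (n : ℝ) * ((∑ i, Y i ω) / n - δ) ^ 2 / 2}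
  have htail : (ℙ : Measure Ω).real {ω | √n * a ≤ ∑ i, Y i ω} ≤ exp (-a ^ 2 / 2) := by
    convert measureReal_sum_ge_le_of_iIndepFun_gaussianReal hindep hgauss
      (by positivity : 0 ≤ √n * a) using 2
    rw [Fintype.card_fin, mul_pow, sq_sqrt n.cast_nonneg]
    field_simp
  have hcompl : (ℙ : Measure Ω).real Eᶜ ≤ (ℙ : Measure Ω).real {ω | √n * a ≤ ∑ i, Y i ω} :=
    measureReal_mono fun ω hω ↦ (sqrt_mul_sub_lt_of_mul_sub_sq_lt hn (not_le.mp hω)).le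
  have hexp : exp (-a ^ 2 / 2) ≤ exp (-a ^ 2 / 8) := exp_le_exp.mpr (by linarith [sq_nonneg a])
  linarith [one_sub_probReal_le_probReal_compl ℙ E]

/-- Gaussian power estimate: for i.i.d. standard normal `Y_1,…,Y_n` and `δ, q > 0`,
`P(n (Ȳ - δ)²/2 ≥ q) ≥ 1 - exp (-(√n δ - √(2q))₊² / 8)`. -/
theorem gaussian_power_estimate
    {Ω : Type*} [MeasureSpace Ω] [IsProbabilityMeasure (ℙ : Measure Ω)]
    (n : ℕ) (hn : 0 < n) (δ q : ℝ) (hδ : 0 < δ) (hq : 0 < q)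
    (Y : Fin n → Ω → ℝ) (hmeas : ∀ i, Measurable (Y i))
    (hindep : iIndepFun Y ℙ)
    (hgauss : ∀ i, Measure.map (Y i) ℙ = gaussianReal 0 1) :
    1 - Real.exp (-(max (Real.sqrt n * δ - Real.sqrt (2 * q)) 0) ^ 2 / 8)
      ≤ (ℙ {ω | q ≤ (n : ℝ) * ((∑ i, Y i ω) / n - δ) ^ 2 / 2}).toReal :=
  gaussian_power_estimate_general n hn δ q Y hindep hgauss
end

section
/- For every ε ∈ [0,x] and θ with θ, θ+x in Θ, (ε/x)·D(θ‖θ+x) − D(θ‖θ+ε) ≥ (εx/2)·inf_{t∈[θ,θ+x]} v(t) − (ε²/2)·sup_{t∈[θ,θ+x]} v(t), where D(θ‖θ+ε) = ∫_θ^{θ+ε}(θ+ε−t)v(t)dt. -/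
open MeasureTheory Real

lemma integral_lin_aux (a b : ℝ) : (∫ t in a..b, (b - t)) = (b - a) ^ 2 / 2 := by
  rw [intervalIntegral.integral_sub intervalIntegrable_const intervalIntegral.intervalIntegrable_id,
    intervalIntegral.integral_const, integral_id, smul_eq_mul]
  ring

/-- Pointwise estimate used in Lemma 5: for `ε ∈ [0,x]`,
`(ε/x) D(θ‖θ+x) - D(θ‖θ+ε) ≥ (ε x/2) inf v - (ε²/2) sup v` over `[θ, θ+x]`,
where `D(θ‖θ+ε) = ∫_θ^{θ+ε} (θ+ε-t) v(t) dt`. -/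
theorem pointwise_kl_estimate (v : ℝ → ℝ) (hv : Continuous v)
    (hvpos : ∀ t, 0 < v t) (θ x ε : ℝ) (hx : 0 < x) (hε : ε ∈ Set.Icc 0 x) :
    (ε * x / 2) * sInf (v '' Set.Icc θ (θ + x))
        - (ε ^ 2 / 2) * sSup (v '' Set.Icc θ (θ + x))
      ≤ (ε / x) * (∫ t in θ..(θ + x), (θ + x - t) * v t)
          - ∫ t in θ..(θ + ε), (θ + ε - t) * v t := by
  obtain ⟨hε0, hεx⟩ := hε
  have hθx : θ ≤ θ + x := by linarith
  have hθε : θ ≤ θ + ε := by linarith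
  set K := v '' Set.Icc θ (θ + x) with hK
  have hKc : IsCompact K := isCompact_Icc.image hv
  have hKne : K.Nonempty := (Set.nonempty_Icc.mpr hθx).image v
  have hbdd : BddBelow K := hKc.bddBelow
  have hbdd' : BddAbove K := hKc.bddAbove
  set m := sInf K
  set M := sSup K
  have hm : ∀ t ∈ Set.Icc θ (θ + x), m ≤ v t := fun t ht =>
    csInf_le hbdd (Set.mem_image_of_mem v ht)
  have hM : ∀ t ∈ Set.Icc θ (θ + x), v t ≤ M := fun t ht =>
    le_csSup hbdd' (Set.mem_image_of_mem v ht)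
  -- lower bound for first integral
  have hint1 : m * (x ^ 2 / 2) ≤ ∫ t in θ..(θ + x), (θ + x - t) * v t := by
    have := intervalIntegral.integral_mono_on (μ := MeasureTheory.volume) (a := θ) (b := θ + x)
      (f := fun t => (θ + x - t) * m) (g := fun t => (θ + x - t) * v t) hθx
      (Continuous.intervalIntegrable (by continuity) _ _)
      (Continuous.intervalIntegrable (by continuity) _ _)
      (fun t ht => by
        have h1 : 0 ≤ θ + x - t := by linarith [ht.2]
        exact mul_le_mul_of_nonneg_left (hm t ht) h1)
    calc m * (x ^ 2 / 2) = ∫ t in θ..(θ + x), (θ + x - t) * m := by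
          rw [intervalIntegral.integral_mul_const, integral_lin_aux]
          ring_nf
      _ ≤ _ := this
  -- upper bound for second integral
  have hint2 : (∫ t in θ..(θ + ε), (θ + ε - t) * v t) ≤ M * (ε ^ 2 / 2) := by
    have := intervalIntegral.integral_mono_on (μ := MeasureTheory.volume) (a := θ) (b := θ + ε)
      (f := fun t => (θ + ε - t) * v t) (g := fun t => (θ + ε - t) * M) hθε
      (Continuous.intervalIntegrable (by continuity) _ _)
      (Continuous.intervalIntegrable (by continuity) _ _)
      (fun t ht => by
        have h1 : 0 ≤ θ + ε - t := by linarith [ht.2]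
        have h2 : t ∈ Set.Icc θ (θ + x) := ⟨ht.1, by linarith [ht.2]⟩
        exact mul_le_mul_of_nonneg_left (hM t h2) h1)
    calc (∫ t in θ..(θ + ε), (θ + ε - t) * v t)
        ≤ ∫ t in θ..(θ + ε), (θ + ε - t) * M := this
      _ = M * (ε ^ 2 / 2) := by
          rw [intervalIntegral.integral_mul_const, integral_lin_aux]; ring_nf
  have hdiv : (ε * x / 2) * m ≤ (ε / x) * (∫ t in θ..(θ + x), (θ + x - t) * v t) := by
    have h := mul_le_mul_of_nonneg_left hint1 (div_nonneg hε0 hx.le)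
    calc (ε * x / 2) * m = (ε / x) * (m * (x ^ 2 / 2)) := by
          field_simp
      _ ≤ _ := h
  have h2 : (ε ^ 2 / 2) * M = M * (ε ^ 2 / 2) := by ring
  linarith [hint2, hdiv]
end
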